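/- Fix integers 1 ≤ m ≤ n. For a subset A = {a₁ < … < a_{m−1}} ⊆ {2,…,n} (with a₀ := 1, a_m := n+1), let V = {(i,j) ∈ [m]×[n] : m−i < j ≤ n−i+1}, D_A = {(i,j) ∈ V : a_{m−i} ≤ j < a_{m−i+1}}, and β_A = ∏_{(i,j) ∈ V∖D_A} x_{i,j}. Then for no sequence 1 ≤ k₁ < k₂ < … < k_m ≤ n does the monomial ∏_{i=1}^m x_{m−i+1,k_i} divide β_A. -/

import Mathlib

open MvPolynomial Finset

/-- The set `V = {(i,j) ∈ [m]×[n] : m−i < j ≤ n−i+1}` (1-based indices). -/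
def Vset (m n : ℕ) : Finset (ℕ × ℕ) :=
  ((Finset.Icc 1 m) ×ˢ (Finset.Icc 1 n)).filter
    (fun p => m - p.1 < p.2 ∧ p.2 ≤ n - p.1 + 1)

/-- `a : ℕ → ℕ` represents an `(m−1)`-element subset `A = {a 1 < … < a (m−1)} ⊆ {2,…,n}`,
together with the conventions `a 0 = 1` and `a m = n + 1`. -/
def SubsetRep (m n : ℕ) (a : ℕ → ℕ) : Prop :=
  a 0 = 1 ∧ a m = n + 1 ∧ ∀ i < m, a i < a (i + 1)

/-- The region `D_A = {(i,j) ∈ V : a_{m−i} ≤ j < a_{m−i+1}}`. -/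
def Dset (m n : ℕ) (a : ℕ → ℕ) : Finset (ℕ × ℕ) :=
  (Vset m n).filter (fun p => a (m - p.1) ≤ p.2 ∧ p.2 < a (m - p.1 + 1))

variable (K : Type*) [Field K]

/-- The squarefree monomial `β_A = ∏_{(i,j) ∈ V ∖ D_A} x_{i,j}`. -/
noncomputable def betaM (m n : ℕ) (a : ℕ → ℕ) : MvPolynomial (ℕ × ℕ) K :=
  ∏ p ∈ Vset m n \ Dset m n a, X p

/-- The antidiagonal monomial `α_j = ∏_{i=1}^m x_{m−i+1, j+i−1}`. -/
noncomputable def alphaM (m : ℕ) (j : ℕ) : MvPolynomial (ℕ × ℕ) K :=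
  ∏ i ∈ Finset.Icc 1 m, X (m - i + 1, j + i - 1)

/-- The ideal `N` generated by the monomials `β_A` for all `(m−1)`-element subsets
`A ⊆ {2,…,n}`. -/
noncomputable def Nideal (m n : ℕ) : Ideal (MvPolynomial (ℕ × ℕ) K) :=
  Ideal.span { f | ∃ a : ℕ → ℕ, SubsetRep m n a ∧ f = betaM K m n a }

/-- `A k`, `1 ≤ k ≤ s`, is a chain `A₁ ≤ … ≤ A_s` of `(m−1)`-element subsets of `{2,…,n}`,
where `≤` is the componentwise partial order. -/
def BetaChain (m n s : ℕ) (A : ℕ → ℕ → ℕ) : Prop :=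
  (∀ k, 1 ≤ k → k ≤ s → SubsetRep m n (A k)) ∧
    (∀ k, 1 ≤ k → k + 1 ≤ s → ∀ i ≤ m, A k i ≤ A (k + 1) i)

/-- `W^{[2]}` : the ideal generated by the squares of all the monomials in `W`. -/
noncomputable def bracketTwo {σ : Type*} (W : Ideal (MvPolynomial σ K)) :
    Ideal (MvPolynomial σ K) :=
  Ideal.span { g | ∃ d : σ →₀ ℕ, (monomial d (1 : K)) ∈ W ∧ g = (monomial d (1 : K)) ^ 2 }

/-- The symbolic power `I^{(n)} = ⋂_{p ∈ Min(I)} (pⁿ R_p ∩ R)`. -/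
noncomputable def symbolicPower {R : Type*} [CommRing R] (I : Ideal R) (n : ℕ) : Ideal R :=
  ⨅ p : {q : Ideal R // q ∈ I.minimalPrimes},
    letI : p.1.IsPrime := p.2.1.1
    ((p.1 ^ n).map (algebraMap R (Localization.AtPrime p.1))).comap
      (algebraMap R (Localization.AtPrime p.1))

lemma prod_X_eq_monomial' {σ R : Type*} [CommSemiring R] (T : Finset σ) :
    (∏ p ∈ T, (X p : MvPolynomial σ R)) =
      monomial (∑ p ∈ T, Finsupp.single p 1) (1 : R) := by
  classical
  induction T using Finset.induction with
  | empty => simp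
  | insert a s h ih =>
    rw [Finset.prod_insert h, Finset.sum_insert h, ih, X, monomial_mul, one_mul]

/-- For no sequence `1 ≤ k₁ < … < k_m ≤ n` does the monomial
`∏_{i=1}^m x_{m−i+1,k_i}` (a generator of the antidiagonal initial ideal of maximal
minors) divide `β_A`. -/
theorem stmt_3 (m n : ℕ) (hm : 1 ≤ m) (hmn : m ≤ n)
    (a : ℕ → ℕ) (ha : SubsetRep m n a)
    (k : ℕ → ℕ) (hk1 : 1 ≤ k 1) (hkn : k m ≤ n)
    (hkmono : ∀ i, 1 ≤ i → i < m → k i < k (i + 1)) :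
    ¬ (∏ i ∈ Finset.Icc 1 m, (X (m - i + 1, k i) : MvPolynomial (ℕ × ℕ) K)) ∣
        betaM K m n a := by
  classical
  intro hdvd
  obtain ⟨ha0, ham, hainc⟩ := ha
  -- a is strictly monotone on [0, m]
  have hamono : ∀ i j, i ≤ j → j ≤ m → a i ≤ a j := by
    intro i j hij hjm
    induction j with
    | zero =>
      have : i = 0 := Nat.le_zero.mp hij
      subst this; exact le_rfl
    | succ j ihj =>
      rcases Nat.lt_or_ge i (j+1) with h | h
      · exact le_trans (ihj (by omega) (by omega)) (le_of_lt (hainc j (by omega)))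
      · have : i = j + 1 := by omega
        subst this; rfl
  -- k is monotone-ish on [1, m]
  have hkmono' : ∀ i j, 1 ≤ i → i ≤ j → j ≤ m → k i + (j - i) ≤ k j := by
    intro i j hi hij hjm
    induction j with
    | zero => omega
    | succ j ihj =>
      rcases Nat.lt_or_ge i (j+1) with h | h
      · have := ihj (by omega) (by omega)
        have := hkmono j (by omega) (by omega)
        omega
      · have : i = j + 1 := by omega
        subst this; simp
  -- find i ∈ [1,m] with a (i-1) ≤ k i < a i
  have key : ∃ i, 1 ≤ i ∧ i ≤ m ∧ a (i - 1) ≤ k i ∧ k i < a i := by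
    by_contra hno
    push_neg at hno
    have step : ∀ i, 1 ≤ i → i ≤ m → a i ≤ k i := by
      intro i
      induction i with
      | zero => omega
      | succ i ihi =>
        intro _ him
        rcases Nat.eq_zero_or_pos i with h0 | hpos
        · subst h0
          have h := hno 1 le_rfl (by omega)
          norm_num at h ⊢
          omega
        · have h1 : a i ≤ k i := ihi (by omega) (by omega)
          have h2 : k i < k (i+1) := hkmono i (by omega) (by omega)
          have := hno (i+1) (by omega) him
          simp only [Nat.add_sub_cancel] at this
          omega
    have := step m hm le_rfl
    omega
  obtain ⟨i, hi1, him, hai1, hai2⟩ := key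
  set p₀ : ℕ × ℕ := (m - i + 1, k i) with hp₀
  -- X p₀ divides the LHS
  have hXdvd : (X p₀ : MvPolynomial (ℕ × ℕ) K) ∣ betaM K m n a :=
    dvd_trans (Finset.dvd_prod_of_mem (fun i => (X (m - i + 1, k i) : MvPolynomial (ℕ × ℕ) K)) (Finset.mem_Icc.mpr ⟨hi1, him⟩)) hdvd
  -- p₀ ∈ Dset, hence p₀ ∉ Vset \ Dset
  have hki_ge : i ≤ k i := by
    have := hkmono' 1 i le_rfl hi1 him
    omega
  have hki_le : k i ≤ n - m + i := by
    have := hkmono' i m hi1 him le_rfl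
    omega
  have hsub : m - p₀.1 = i - 1 := by simp [hp₀]; omega
  have hpV : p₀ ∈ Vset m n := by
    simp only [Vset, Finset.mem_filter, Finset.mem_product, Finset.mem_Icc, hp₀]
    omega
  have hpD : p₀ ∈ Dset m n a := by
    simp only [Dset, Finset.mem_filter]
    refine ⟨hpV, ?_, ?_⟩
    · rw [hsub]; exact hai1
    · rw [hsub]
      have : i - 1 + 1 = i := by omega
      rw [this]; exact hai2
  have hnot : p₀ ∉ Vset m n \ Dset m n a := by
    simp [Finset.mem_sdiff, hpD]
  -- betaM is a monomial with 0 exponent at p₀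
  rw [betaM, prod_X_eq_monomial'] at hXdvd
  rw [X_dvd_monomial] at hXdvd
  rcases hXdvd with h | h
  · exact one_ne_zero h
  · apply h
    rw [Finset.sum_apply']
    apply Finset.sum_eq_zero
    intro p hp
    rw [Finsupp.single_apply]
    split_ifs with he
    · exact absurd (he ▸ hp) hnot
    · rfl
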